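/- Let A₁, A₂ : ℝ → ℂ solve the ODE system i Aⱼ' = Fⱼ(A₁,A₂) with associated matrix 𝒜, and suppose 𝒜 has real entries, k > 0, Γ = (γ₁,γ₂,γ₃) satisfies 𝒜²Γ = -k²Γ with Γ ≠ 0, and Γ̃ = (γ̃₁,γ̃₂,γ̃₃) = k⁻¹𝒜Γ. Define ρ₁=|A₁|², ρ₂=|A₂|², R=2Re(conj(A₁)A₂), and Q(t) = (γ₁ρ₁ + γ₂R + γ₃ρ₂)² + (γ̃₁ρ₁ + γ̃₂R + γ̃₃ρ₂)². Then Q is constant in t. -/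

import Mathlib

open Matrix

/-- The general gauge-invariant cubic nonlinearity with six real coefficients. -/
noncomputable def Fcub (m₁ m₂ m₃ m₄ m₅ m₆ : ℝ) (u₁ u₂ : ℂ) : ℂ :=
  ((m₁ * Complex.normSq u₁ : ℝ) : ℂ) * u₁ + ((m₂ * Complex.normSq u₁ : ℝ) : ℂ) * u₂
    + (m₃ : ℂ) * u₁ ^ 2 * (starRingEnd ℂ) u₂ + ((m₄ * Complex.normSq u₂ : ℝ) : ℂ) * u₁
    + (m₅ : ℂ) * u₂ ^ 2 * (starRingEnd ℂ) u₁ + ((m₆ * Complex.normSq u₂ : ℝ) : ℂ) * u₂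

/-- The matrix part of the matrix-vector representation of the cubic system. -/
def Amat (l₁ l₂ l₃ l₄ l₅ l₆ l₇ l₈ l₉ l₁₀ l₁₁ l₁₂ : ℝ) : Matrix (Fin 3) (Fin 3) ℝ :=
  !![l₂ - l₃, -l₁ + l₈ - l₉, -l₇;
     l₅, -l₃ + l₁₁, -l₉;
     l₆, -l₄ + l₅ + l₁₂, -l₁₀ + l₁₁]

/-!
Write `x = (ρ₁, R, ρ₂)` and `ω = 2 Im(conj A₁ A₂)`. Along a solution every linear functional of `x`
evolves by `d/dt (x ⬝ g) = ω (x ⬝ 𝒜 g)`. Since `𝒜 Γ = k Γ̃` and `𝒜 Γ̃ = -k Γ`, the pair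
`(x ⬝ Γ, x ⬝ Γ̃)` is rotated with angular speed `k ω`, so the sum of its squares is constant.
-/

open ComplexConjugate

theorem HasDerivAt.re_conj_mul {f g : ℝ → ℂ} {f' g' : ℂ} {t : ℝ}
    (hf : HasDerivAt f f' t) (hg : HasDerivAt g g' t) :
    HasDerivAt (fun s => (conj (f s) * g s).re) (conj f' * g t + conj (f t) * g').re t :=
  Complex.reCLM.hasFDerivAt.comp_hasDerivAt t (hf.star.mul hg)

noncomputable def densityVec (u₁ u₂ : ℂ) : Fin 3 → ℝ :=
  ![Complex.normSq u₁, 2 * (conj u₁ * u₂).re, Complex.normSq u₂]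

noncomputable def densityVecDeriv (u₁ u₂ v₁ v₂ : ℂ) : Fin 3 → ℝ :=
  ![2 * (conj u₁ * v₁).re, 2 * (conj v₁ * u₂ + conj u₁ * v₂).re, 2 * (conj u₂ * v₂).re]

theorem densityVec_dotProduct (u₁ u₂ : ℂ) (g : Fin 3 → ℝ) :
    densityVec u₁ u₂ ⬝ᵥ g
      = g 0 * Complex.normSq u₁ + g 1 * (2 * (conj u₁ * u₂).re) + g 2 * Complex.normSq u₂ := by
  simp [densityVec, dotProduct, Fin.sum_univ_three, mul_comm]

theorem hasDerivAt_densityVec_dotProduct {A₁ A₂ : ℝ → ℂ} {A₁' A₂' : ℂ} {t : ℝ}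
    (h₁ : HasDerivAt A₁ A₁' t) (h₂ : HasDerivAt A₂ A₂' t) (g : Fin 3 → ℝ) :
    HasDerivAt (fun s => densityVec (A₁ s) (A₂ s) ⬝ᵥ g)
      (densityVecDeriv (A₁ t) (A₂ t) A₁' A₂' ⬝ᵥ g) t := by
  have hnormSq (u : ℂ) : Complex.normSq u = (conj u * u).re := by
    rw [← Complex.normSq_eq_conj_mul_self, Complex.ofReal_re]
  have h₁₁ := h₁.re_conj_mul h₁
  have h₁₂ := h₁.re_conj_mul h₂
  have h₂₂ := h₂.re_conj_mul h₂
  simp only [densityVec, densityVecDeriv, dotProduct, Fin.sum_univ_three, hnormSq]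
  refine (((h₁₁.mul_const (g 0)).add ((h₁₂.const_mul 2).mul_const (g 1))).add
    (h₂₂.mul_const (g 2))).congr_deriv ?_
  simp only [Complex.add_re, Complex.mul_re, Complex.conj_re, Complex.conj_im, cons_val_zero,
    cons_val_one, cons_val]
  ring

theorem densityVecDeriv_cubic (l₁ l₂ l₃ l₄ l₅ l₆ l₇ l₈ l₉ l₁₀ l₁₁ l₁₂ : ℝ) (u₁ u₂ : ℂ)
    (g : Fin 3 → ℝ) :
    densityVecDeriv u₁ u₂ (-Complex.I * Fcub l₁ l₂ l₃ l₄ l₅ l₆ u₁ u₂)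
        (-Complex.I * Fcub l₇ l₈ l₉ l₁₀ l₁₁ l₁₂ u₁ u₂) ⬝ᵥ g
      = 2 * (conj u₁ * u₂).im *
          (densityVec u₁ u₂ ⬝ᵥ Amat l₁ l₂ l₃ l₄ l₅ l₆ l₇ l₈ l₉ l₁₀ l₁₁ l₁₂ *ᵥ g) := by
  simp only [densityVec, densityVecDeriv, Amat, Fcub, mulVec, dotProduct, Fin.sum_univ_three,
    of_apply, cons_val', cons_val_zero, cons_val_one, cons_val, cons_val_fin_one,
    Complex.normSq_apply, pow_two, map_add, map_mul, map_neg, Complex.conj_ofReal, Complex.conj_I,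
    Complex.add_re, Complex.add_im, Complex.mul_re, Complex.mul_im, Complex.neg_re, Complex.neg_im,
    Complex.conj_re, Complex.conj_im, Complex.I_re, Complex.I_im, Complex.ofReal_re,
    Complex.ofReal_im]
  ring

theorem sq_dotProduct_add_sq_dotProduct_eq {ι : Type*} [Fintype ι] {x : ℝ → ι → ℝ}
    {ω : ℝ → ℝ} {M : Matrix ι ι ℝ}
    (hx : ∀ g t, HasDerivAt (fun s => x s ⬝ᵥ g) (ω t * (x t ⬝ᵥ M *ᵥ g)) t)
    {k : ℝ} {Γ Γ' : ι → ℝ} (hΓ : M *ᵥ Γ = k • Γ') (hΓ' : M *ᵥ Γ' = -k • Γ) (s t : ℝ) :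
    (x s ⬝ᵥ Γ) ^ 2 + (x s ⬝ᵥ Γ') ^ 2 = (x t ⬝ᵥ Γ) ^ 2 + (x t ⬝ᵥ Γ') ^ 2 := by
  have hderiv (u : ℝ) :
      HasDerivAt (fun s => (x s ⬝ᵥ Γ) ^ 2 + (x s ⬝ᵥ Γ') ^ 2) 0 u := by
    have h := ((hx Γ u).pow 2).add ((hx Γ' u).pow 2)
    rw [hΓ, hΓ', dotProduct_smul, dotProduct_smul, smul_eq_mul, smul_eq_mul] at h
    exact h.congr_deriv (by push_cast; ring)
  exact is_const_of_deriv_eq_zero (fun u => (hderiv u).differentiableAt)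
    (fun u => (hderiv u).deriv) s t

theorem mulVec_inv_smul_mulVec_eq {ι : Type*} [Fintype ι] {M : Matrix ι ι ℝ} {k : ℝ}
    (hk : k ≠ 0) {Γ : ι → ℝ} (h : (M * M) *ᵥ Γ = -(k ^ 2) • Γ) :
    M *ᵥ (k⁻¹ • M *ᵥ Γ) = -k • Γ := by
  rw [mulVec_smul, mulVec_mulVec, h, smul_smul]
  congr 1
  field_simp

theorem stmt6 (l₁ l₂ l₃ l₄ l₅ l₆ l₇ l₈ l₉ l₁₀ l₁₁ l₁₂ : ℝ)
    (A₁ A₂ A₁' A₂' : ℝ → ℂ)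
    (hd₁ : ∀ t, HasDerivAt A₁ (A₁' t) t)
    (hd₂ : ∀ t, HasDerivAt A₂ (A₂' t) t)
    (hode₁ : ∀ t, Complex.I * A₁' t = Fcub l₁ l₂ l₃ l₄ l₅ l₆ (A₁ t) (A₂ t))
    (hode₂ : ∀ t, Complex.I * A₂' t = Fcub l₇ l₈ l₉ l₁₀ l₁₁ l₁₂ (A₁ t) (A₂ t))
    (k : ℝ) (hk : 0 < k) (Γ : Fin 3 → ℝ)
    (heig : let 𝒜 := Amat l₁ l₂ l₃ l₄ l₅ l₆ l₇ l₈ l₉ l₁₀ l₁₁ l₁₂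
      (𝒜 * 𝒜).mulVec Γ = (-(k ^ 2)) • Γ) :
    let 𝒜 := Amat l₁ l₂ l₃ l₄ l₅ l₆ l₇ l₈ l₉ l₁₀ l₁₁ l₁₂
    let Γt : Fin 3 → ℝ := k⁻¹ • 𝒜.mulVec Γ
    let ρ₁ : ℝ → ℝ := fun t => Complex.normSq (A₁ t)
    let ρ₂ : ℝ → ℝ := fun t => Complex.normSq (A₂ t)
    let R : ℝ → ℝ := fun t => 2 * ((starRingEnd ℂ) (A₁ t) * A₂ t).re
    let Q : ℝ → ℝ := fun t =>
      (Γ 0 * ρ₁ t + Γ 1 * R t + Γ 2 * ρ₂ t) ^ 2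
        + (Γt 0 * ρ₁ t + Γt 1 * R t + Γt 2 * ρ₂ t) ^ 2
    ∀ s t : ℝ, Q s = Q t := by
  intro 𝒜 Γt ρ₁ ρ₂ R Q s t
  have hsolve {a b : ℂ} (h : Complex.I * a = b) : a = -Complex.I * b := by
    rw [← h, ← mul_assoc, neg_mul, Complex.I_mul_I, neg_neg, one_mul]
  have hflow (g : Fin 3 → ℝ) (u : ℝ) :
      HasDerivAt (fun s => densityVec (A₁ s) (A₂ s) ⬝ᵥ g)
        (2 * (conj (A₁ u) * A₂ u).im * (densityVec (A₁ u) (A₂ u) ⬝ᵥ 𝒜 *ᵥ g)) u := by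
    rw [← densityVecDeriv_cubic, ← hsolve (hode₁ u), ← hsolve (hode₂ u)]
    exact hasDerivAt_densityVec_dotProduct (hd₁ u) (hd₂ u) g
  have hQ (u : ℝ) :
      Q u = (densityVec (A₁ u) (A₂ u) ⬝ᵥ Γ) ^ 2 + (densityVec (A₁ u) (A₂ u) ⬝ᵥ Γt) ^ 2 := by
    simp only [Q, ρ₁, ρ₂, R, densityVec_dotProduct]
  rw [hQ, hQ]
  exact sq_dotProduct_add_sq_dotProduct_eq hflow (smul_inv_smul₀ hk.ne' _).symm
    (mulVec_inv_smul_mulVec_eq hk.ne' heig) s t
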